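/- Let n ≥ 2, let α = (α_{ij}) be real parameters indexed by wedges with α_{ij} ≥ 0 for all wedges, and h = (h_i) arbitrary real parameters indexed by edges. Then for any subsets E, F ⊆ E_n the partition functions of the restricted systems satisfy Z_{E;α,h} · Z_{F;α,h} ≤ Z_{E∪F;α,h} · Z_{E∩F;α,h}. -/

import Mathlib

open Finset

/-- Edges of the complete graph on `n` labeled vertices. -/
def Edge (n : ℕ) : Type := {e : Sym2 (Fin n) // ¬ e.IsDiag}

instance (n : ℕ) : Fintype (Edge n) := by unfold Edge; infer_instance
instance (n : ℕ) : DecidableEq (Edge n) := by unfold Edge; infer_instance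

/-- Two distinct edges are neighbors (they form a wedge) when they share a vertex. -/
def EdgeAdj {n : ℕ} (i j : Edge n) : Prop := i ≠ j ∧ ∃ v, v ∈ i.1 ∧ v ∈ j.1

instance {n : ℕ} (i j : Edge n) : Decidable (EdgeAdj i j) := by
  unfold EdgeAdj; infer_instance

/-- Hamiltonian `H_{n;α,h}(x) = (1/n) Σ_{{i,j} ∈ W_n} α_{ij} x_i x_j + Σ_i h_i x_i`,
where the sum over unordered wedges of the symmetric collection `α` is written as
half of the sum over ordered adjacent pairs. -/
noncomputable def Ham (n : ℕ) (α : Edge n → Edge n → ℝ) (h : Edge n → ℝ)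
    (x : Edge n → Fin 2) : ℝ :=
  (1 / (2 * (n : ℝ))) * ∑ i : Edge n, ∑ j : Edge n,
      (if EdgeAdj i j then α i j * ((x i : ℕ) : ℝ) * ((x j : ℕ) : ℝ) else 0)
    + ∑ i : Edge n, h i * ((x i : ℕ) : ℝ)

/-- Partition function. -/
noncomputable def Zpart (n : ℕ) (α : Edge n → Edge n → ℝ) (h : Edge n → ℝ) : ℝ :=
  ∑ x : Edge n → Fin 2, Real.exp (Ham n α h x)

/-- Gibbs measure. -/
noncomputable def gibbs (n : ℕ) (α : Edge n → Edge n → ℝ) (h : Edge n → ℝ)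
    (x : Edge n → Fin 2) : ℝ :=
  Real.exp (Ham n α h x) / Zpart n α h

/-- Expectation with respect to the Gibbs measure. -/
noncomputable def expect (n : ℕ) (α : Edge n → Edge n → ℝ) (h : Edge n → ℝ)
    (f : (Edge n → Fin 2) → ℝ) : ℝ :=
  ∑ x : Edge n → Fin 2, f x * gibbs n α h x

/-- `x_C = Π_{i ∈ C} x_i`. -/
def prodOn {n : ℕ} (C : Finset (Edge n)) (x : Edge n → Fin 2) : ℝ :=
  ∏ i ∈ C, ((x i : ℕ) : ℝ)

/-- Restricted Hamiltonian on a subset `A` of edges. -/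
noncomputable def HamR (n : ℕ) (A : Finset (Edge n)) (α : Edge n → Edge n → ℝ)
    (h : Edge n → ℝ) (x : Edge n → Fin 2) : ℝ :=
  (1 / (2 * (n : ℝ))) * ∑ i ∈ A, ∑ j ∈ A,
      (if EdgeAdj i j then α i j * ((x i : ℕ) : ℝ) * ((x j : ℕ) : ℝ) else 0)
    + ∑ i ∈ A, h i * ((x i : ℕ) : ℝ)

/-- The copy of `{0,1}^A` inside `{0,1}^{E_n}`: configurations vanishing outside `A`. -/
def confR (n : ℕ) (A : Finset (Edge n)) : Finset (Edge n → Fin 2) :=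
  Finset.univ.filter (fun x => ∀ i ∉ A, x i = 0)

/-- Restricted partition function `Z_{A;α,h}`. -/
noncomputable def ZR (n : ℕ) (A : Finset (Edge n)) (α : Edge n → Edge n → ℝ)
    (h : Edge n → ℝ) : ℝ :=
  ∑ x ∈ confR n A, Real.exp (HamR n A α h x)

/-- Restricted expectation `E_{A;α,h}`. -/
noncomputable def expectR (n : ℕ) (A : Finset (Edge n)) (α : Edge n → Edge n → ℝ)
    (h : Edge n → ℝ) (f : (Edge n → Fin 2) → ℝ) : ℝ :=
  (∑ x ∈ confR n A, f x * Real.exp (HamR n A α h x)) / ZR n A α h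

/-! A configuration supported on `A` has the same energy under `H_A` as under the full
Hamiltonian `H`, so `Z_A` sums `exp ∘ H` over the configurations supported on `A`. When `α ≥ 0`
on wedges, `H` is supermodular on the lattice `{0,1}^{E_n}`: each term `α_{ij} x_i x_j` is, by the
rearrangement inequality, and `Σ h_i x_i` is modular. Hence `exp ∘ H` is log-supermodular, and the
Ahlswede–Daykin four functions theorem applies to the configurations supported on `E` and on `F`,
whose meets and joins are supported on `E ∩ F` and `E ∪ F`. -/

open scoped FinsetFamily

lemma mul_add_mul_le_min_mul_min_add_max_mul_max {R : Type*} [CommRing R] [LinearOrder R]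
    [IsStrictOrderedRing R] (a b c d : R) :
    a * c + b * d ≤ min a b * min c d + max a b * max c d := by
  rcases le_total a b with hab | hab <;> rcases le_total c d with hcd | hcd <;>
    simp only [min_eq_left, min_eq_right, max_eq_left, max_eq_right, hab, hcd] <;>
    nlinarith [mul_nonneg (sub_nonneg.2 hab) (sub_nonneg.2 hcd)]

lemma Fin.natCast_val_inf {k : ℕ} (u v : Fin k) :
    (((u ⊓ v : Fin k) : ℕ) : ℝ) = min ((u : ℕ) : ℝ) ((v : ℕ) : ℝ) := by
  simp [Fin.coe_min]

lemma Fin.natCast_val_sup {k : ℕ} (u v : Fin k) :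
    (((u ⊔ v : Fin k) : ℕ) : ℝ) = max ((u : ℕ) : ℝ) ((v : ℕ) : ℝ) := by
  simp [Fin.coe_max]

section Hamiltonian

variable {n : ℕ} (α : Edge n → Edge n → ℝ) (h : Edge n → ℝ)

lemma ham_add_ham_le_ham_inf_add_ham_sup (hα : ∀ i j, EdgeAdj i j → 0 ≤ α i j)
    (a b : Edge n → Fin 2) :
    Ham n α h a + Ham n α h b ≤ Ham n α h (a ⊓ b) + Ham n α h (a ⊔ b) := by
  have hfield : ∀ i, h i * ((a i : ℕ) : ℝ) + h i * ((b i : ℕ) : ℝ) =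
      h i * (((a ⊓ b) i : ℕ) : ℝ) + h i * (((a ⊔ b) i : ℕ) : ℝ) := by
    intro i
    rw [← mul_add, ← mul_add, Pi.inf_apply, Pi.sup_apply, Fin.natCast_val_inf,
      Fin.natCast_val_sup, min_add_max]
  have hpair : ∀ i j,
      ((if EdgeAdj i j then α i j * ((a i : ℕ) : ℝ) * ((a j : ℕ) : ℝ) else 0) +
        if EdgeAdj i j then α i j * ((b i : ℕ) : ℝ) * ((b j : ℕ) : ℝ) else 0) ≤
      (if EdgeAdj i j then α i j * (((a ⊓ b) i : ℕ) : ℝ) * (((a ⊓ b) j : ℕ) : ℝ) else 0) +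
        if EdgeAdj i j then α i j * (((a ⊔ b) i : ℕ) : ℝ) * (((a ⊔ b) j : ℕ) : ℝ) else 0 := by
    intro i j
    split_ifs with hij
    · simp only [mul_assoc, ← mul_add, Pi.inf_apply, Pi.sup_apply, Fin.natCast_val_inf,
        Fin.natCast_val_sup]
      exact mul_le_mul_of_nonneg_left (mul_add_mul_le_min_mul_min_add_max_mul_max _ _ _ _)
        (hα i j hij)
    · simp
  have hquad := Finset.sum_le_sum fun i (_ : i ∈ univ) =>
    Finset.sum_le_sum fun j (_ : j ∈ univ) => hpair i j
  have hlin := Finset.sum_congr (rfl : (univ : Finset (Edge n)) = univ) fun i _ => hfield i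
  simp only [Finset.sum_add_distrib] at hquad hlin
  have hcoef : (0 : ℝ) ≤ 1 / (2 * n) := by positivity
  unfold Ham
  linarith [mul_le_mul_of_nonneg_left hquad hcoef]

@[simp]
lemma mem_confR {A : Finset (Edge n)} {x : Edge n → Fin 2} :
    x ∈ confR n A ↔ ∀ i ∉ A, x i = 0 := by
  simp [confR]

lemma hamR_eq_ham_of_mem_confR {A : Finset (Edge n)} {x : Edge n → Fin 2}
    (hx : x ∈ confR n A) : HamR n A α h x = Ham n α h x := by
  rw [mem_confR] at hx
  have hvanish : ∀ i ∉ A, ((x i : ℕ) : ℝ) = 0 := fun i hi => by simp [hx i hi]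
  unfold HamR Ham
  congr 1
  · congr 1
    refine (Finset.sum_congr rfl fun i _ => ?_).trans
      (Finset.sum_subset (subset_univ A) fun i _ hi => by simp [hvanish i hi])
    exact Finset.sum_subset (subset_univ A) fun j _ hj => by simp [hvanish j hj]
  · exact Finset.sum_subset (subset_univ A) fun i _ hi => by simp [hvanish i hi]

lemma ZR_eq_sum_exp_ham (A : Finset (Edge n)) :
    ZR n A α h = ∑ x ∈ confR n A, Real.exp (Ham n α h x) :=
  Finset.sum_congr rfl fun x hx => by rw [hamR_eq_ham_of_mem_confR α h hx]

end Hamiltonian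

lemma confR_infs_confR_subset {n : ℕ} (E F : Finset (Edge n)) :
    confR n E ⊼ confR n F ⊆ confR n (E ∩ F) := by
  simp only [Finset.subset_iff, Finset.mem_infs, mem_confR]
  rintro _ ⟨a, ha, b, hb, rfl⟩ i hi
  rw [Finset.mem_inter, not_and_or] at hi
  rcases hi with hiE | hiF
  · simp [ha i hiE]
  · simp [hb i hiF]

lemma confR_sups_confR_subset {n : ℕ} (E F : Finset (Edge n)) :
    confR n E ⊻ confR n F ⊆ confR n (E ∪ F) := by
  simp only [Finset.subset_iff, Finset.mem_sups, mem_confR]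
  rintro _ ⟨a, ha, b, hb, rfl⟩ i hi
  rw [Finset.mem_union, not_or] at hi
  simp [ha i hi.1, hb i hi.2]

theorem partition_function_supermodular_general (n : ℕ)
    (E F : Finset (Edge n))
    (α : Edge n → Edge n → ℝ) (h : Edge n → ℝ)
    (hα : ∀ i j, EdgeAdj i j → 0 ≤ α i j) :
    ZR n E α h * ZR n F α h ≤ ZR n (E ∪ F) α h * ZR n (E ∩ F) α h := by
  set g : (Edge n → Fin 2) → ℝ := fun x => Real.exp (Ham n α h x)
  have hg : 0 ≤ g := fun x => (Real.exp_pos _).le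
  have hlogsuper : ∀ a b, g a * g b ≤ g (a ⊓ b) * g (a ⊔ b) := fun a b => by
    simp only [g, ← Real.exp_add, Real.exp_le_exp]
    exact ham_add_ham_le_ham_inf_add_ham_sup α h hα a b
  have hsum_mono : ∀ {s t : Finset (Edge n → Fin 2)}, s ⊆ t → ∑ x ∈ s, g x ≤ ∑ x ∈ t, g x :=
    fun hst => Finset.sum_le_sum_of_subset_of_nonneg hst fun x _ _ => hg x
  simp only [ZR_eq_sum_exp_ham]
  calc (∑ x ∈ confR n E, g x) * ∑ x ∈ confR n F, g x
      ≤ (∑ x ∈ confR n E ⊼ confR n F, g x) * ∑ x ∈ confR n E ⊻ confR n F, g x :=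
        four_functions_theorem g g g g hg hg hg hg hlogsuper _ _
    _ ≤ (∑ x ∈ confR n (E ∩ F), g x) * ∑ x ∈ confR n (E ∪ F), g x :=
        mul_le_mul (hsum_mono (confR_infs_confR_subset E F))
          (hsum_mono (confR_sups_confR_subset E F)) (Finset.sum_nonneg fun x _ => hg x)
          (Finset.sum_nonneg fun x _ => hg x)
    _ = (∑ x ∈ confR n (E ∪ F), g x) * ∑ x ∈ confR n (E ∩ F), g x := mul_comm _ _

/-- Lemma 3.9: if `α ≥ 0` on wedges, then the restricted partition
functions satisfy `Z_E Z_F ≤ Z_{E ∪ F} Z_{E ∩ F}`. -/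
theorem partition_function_supermodular (n : ℕ) (hn : 2 ≤ n)
    (E F : Finset (Edge n))
    (α : Edge n → Edge n → ℝ) (h : Edge n → ℝ)
    (hsym : ∀ i j, α i j = α j i)
    (hα : ∀ i j, EdgeAdj i j → 0 ≤ α i j) :
    ZR n E α h * ZR n F α h ≤ ZR n (E ∪ F) α h * ZR n (E ∩ F) α h :=
  partition_function_supermodular_general n E F α h hα
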